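/- Let J be a strongly stable monomial ideal and let m be the maximum degree of monomials in B_J. With 𝓕_J the generic J-marked set in ℤ[C][x₀,…,xₙ], 𝓘 = (𝓕_J), and 𝔦_J ⊆ ℤ[C] the ideal generated by the x-coefficients of all polynomials in 𝓘 ∩ ⟨N(J)⟩, the ideal 𝔦_J is already generated by the x-coefficients of the homogeneous polynomials in (𝓘 ∩ ⟨N(J)⟩)_s for the finitely many degrees s ≤ m+1. -/

import Mathlib

open MvPolynomial

noncomputable section

/-- Exponent vectors of monomials in the variables `x₀, …, xₙ`. -/
abbrev Mon (n : ℕ) : Type := Fin (n + 1) →₀ ℕ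

namespace MarkedFamilies

variable {n : ℕ}

/-- The total degree of a monomial given by its exponent vector. -/
def mdeg (α : Mon n) : ℕ := α.sum fun _ e => e

/-- A monomial ideal, identified with its (upward closed) set of monomials. -/
def IsMonomialIdeal (J : Set (Mon n)) : Prop := ∀ α ∈ J, ∀ δ : Mon n, α + δ ∈ J

/-- A strongly stable monomial ideal: a monomial ideal such that for every monomial
`x^α ∈ J`, every variable `x_j` dividing `x^α` and every `i > j`, `(x_i/x_j)·x^α ∈ J`. -/
def IsStronglyStable (J : Set (Mon n)) : Prop :=
  IsMonomialIdeal J ∧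
    ∀ α ∈ J, ∀ j : Fin (n + 1), α j ≠ 0 → ∀ i : Fin (n + 1), j < i →
      α - Finsupp.single j 1 + Finsupp.single i 1 ∈ J

/-- The minimal monomial generators `B_J` of a monomial ideal `J`. -/
def minGens (J : Set (Mon n)) : Set (Mon n) :=
  {α | α ∈ J ∧ ∀ j : Fin (n + 1), α j ≠ 0 → α - Finsupp.single j 1 ∉ J}

/-- `min x^γ ≥ max x^δ`: every variable dividing `x^γ` is at least every variable
dividing `x^δ` (vacuously true when either monomial is `1`). -/
def minGeMax (γ δ : Mon n) : Prop := ∀ i ∈ γ.support, ∀ j ∈ δ.support, j ≤ i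

/-- Lexicographic order induced by `x₀ < ⋯ < xₙ`: `a <ₗₑₓ b` iff at the largest
index where they differ, `a` has the smaller exponent. -/
def lexLt (a b : Mon n) : Prop :=
  ∃ i : Fin (n + 1), a i < b i ∧ ∀ j : Fin (n + 1), i < j → a j = b j

/-- A saturated strongly stable ideal: strongly stable and no minimal generator is
divisible by `x₀`. -/
def IsSaturatedSS (J : Set (Mon n)) : Prop :=
  IsStronglyStable J ∧ ∀ α ∈ minGens J, α 0 = 0

/-- The truncation `J_{≥ t}`: the (monomial) ideal generated by the monomials of `J`
of degree at least `t`. -/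
def truncSet (J : Set (Mon n)) (t : ℕ) : Set (Mon n) := {α | α ∈ J ∧ t ≤ mdeg α}

section Ring

variable (A : Type*) [CommRing A]

/-- `⟨N(J)⟩`: the `A`-span of the monomials not in `J`. -/
def nSpan (J : Set (Mon n)) : Submodule A (MvPolynomial (Fin (n + 1)) A) :=
  Submodule.span A {p | ∃ β : Mon n, β ∉ J ∧ p = monomial β (1 : A)}

/-- `⟨N(J)_s⟩`: the `A`-span of the monomials of degree `s` not in `J`. -/
def nSpanDeg (J : Set (Mon n)) (s : ℕ) : Submodule A (MvPolynomial (Fin (n + 1)) A) :=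
  Submodule.span A {p | ∃ β : Mon n, β ∉ J ∧ mdeg β = s ∧ p = monomial β (1 : A)}

/-- `I_s`: the degree-`s` homogeneous component of an ideal, as an `A`-submodule. -/
def idealDeg (I : Ideal (MvPolynomial (Fin (n + 1)) A)) (s : ℕ) :
    Submodule A (MvPolynomial (Fin (n + 1)) A) :=
  Submodule.restrictScalars A I ⊓ homogeneousSubmodule (Fin (n + 1)) A s

/-- `I_{≥ s}`: the ideal `⊕_{t ≥ s} I_t`, i.e. the ideal generated by the homogeneous
elements of `I` of degree at least `s`. -/
def idealGeq (I : Ideal (MvPolynomial (Fin (n + 1)) A)) (s : ℕ) :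
    Ideal (MvPolynomial (Fin (n + 1)) A) :=
  Ideal.span {f | f ∈ I ∧ ∃ t : ℕ, s ≤ t ∧ f.IsHomogeneous t}

/-- A homogeneous ideal of the polynomial ring. -/
def IsHomogIdeal (I : Ideal (MvPolynomial (Fin (n + 1)) A)) : Prop :=
  ∀ f ∈ I, ∀ s : ℕ, homogeneousComponent s f ∈ I

variable {A}

/-- A `J`-marked set: a family assigning to each minimal generator `x^α ∈ B_J` a
polynomial `f_α = x^α − Σ_{x^β ∈ N(J)_{|α|}} c_{αβ} x^β`. -/
def IsMarkedSet (J : Set (Mon n)) (F : Mon n → MvPolynomial (Fin (n + 1)) A) : Prop :=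
  ∀ α ∈ minGens J, (F α).coeff α = 1 ∧
    ∀ β ∈ (F α).support, β ≠ α → β ∉ J ∧ mdeg β = mdeg α

/-- The ideal generated by a marked set. -/
def markedIdeal (J : Set (Mon n)) (F : Mon n → MvPolynomial (Fin (n + 1)) A) :
    Ideal (MvPolynomial (Fin (n + 1)) A) :=
  Ideal.span (F '' minGens J)

/-- A `J`-marked basis: a `J`-marked set `F` with `A[x] = (F) ⊕ ⟨N(J)⟩` as `A`-modules. -/
def IsMarkedBasis (J : Set (Mon n)) (F : Mon n → MvPolynomial (Fin (n + 1)) A) : Prop :=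
  IsMarkedSet J F ∧
    IsCompl (Submodule.restrictScalars A (markedIdeal J F)) (nSpan A J)

/-- `F_J^{(s)} = { x^δ f_α : deg(x^δ f_α) = s, min x^α ≥ max x^δ }`. -/
def FSet (J : Set (Mon n)) (F : Mon n → MvPolynomial (Fin (n + 1)) A) (s : ℕ) :
    Set (MvPolynomial (Fin (n + 1)) A) :=
  {p | ∃ α δ : Mon n, α ∈ minGens J ∧ mdeg α + mdeg δ = s ∧ minGeMax α δ ∧
        p = monomial δ (1 : A) * F α}

/-- `F̂_J^{(s)} = { x^δ f_α : deg(x^δ f_α) = s, min x^α < max x^δ }`. -/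
def FHatSet (J : Set (Mon n)) (F : Mon n → MvPolynomial (Fin (n + 1)) A) (s : ℕ) :
    Set (MvPolynomial (Fin (n + 1)) A) :=
  {p | ∃ α δ : Mon n, α ∈ minGens J ∧ mdeg α + mdeg δ = s ∧ ¬ minGeMax α δ ∧
        p = monomial δ (1 : A) * F α}

/-- `SF_J^{(s)} = { x^δ f_β − x^γ f_α : x^δ f_β ∈ F̂_J^{(s)}, x^γ f_α ∈ F_J^{(s)},
x^δ x^β = x^γ x^α }`. -/
def SFSet (J : Set (Mon n)) (F : Mon n → MvPolynomial (Fin (n + 1)) A) (s : ℕ) :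
    Set (MvPolynomial (Fin (n + 1)) A) :=
  {p | ∃ α γ β δ : Mon n, α ∈ minGens J ∧ β ∈ minGens J ∧
      mdeg β + mdeg δ = s ∧ ¬ minGeMax β δ ∧
      mdeg α + mdeg γ = s ∧ minGeMax α γ ∧
      δ + β = γ + α ∧ p = monomial δ (1 : A) * F β - monomial γ (1 : A) * F α}

/-- A `(J_s)`-marked set: one marked polynomial `f̃_γ = x^γ − Σ_{x^δ ∈ N(J)_s} d_{γδ} x^δ`
for each monomial `x^γ` of degree `s` in `J`. -/
def IsTruncMarkedSet (J : Set (Mon n)) (s : ℕ)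
    (f : Mon n → MvPolynomial (Fin (n + 1)) A) : Prop :=
  ∀ γ : Mon n, γ ∈ J → mdeg γ = s →
    (f γ).coeff γ = 1 ∧ ∀ β ∈ (f γ).support, β ≠ γ → β ∉ J ∧ mdeg β = s

end Ring

/-- Index set for the generic coefficients `C_{αβ}` (`x^α ∈ B_J`, `x^β ∈ N(J)_{|α|}`). -/
abbrev CIdx (J : Set (Mon n)) : Type :=
  {p : Mon n × Mon n // p.1 ∈ minGens J ∧ p.2 ∉ J ∧ mdeg p.2 = mdeg p.1}

/-- The coefficient ring `ℤ[C]`. -/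
abbrev ZC (J : Set (Mon n)) : Type := MvPolynomial (CIdx J) ℤ

/-- The generic `J`-marked set `𝓕_J = { x^α − Σ_{x^β ∈ N(J)_{|α|}} C_{αβ} x^β }`
in `ℤ[C][x]`, characterized through its coefficients. -/
def IsGenericMarkedSet (J : Set (Mon n))
    (𝓕 : Mon n → MvPolynomial (Fin (n + 1)) (ZC J)) : Prop :=
  ∀ α : Mon n, ∀ hα : α ∈ minGens J,
    (𝓕 α).coeff α = 1 ∧
    (∀ γ : Mon n, ∀ hγ : γ ∉ J ∧ mdeg γ = mdeg α,
      (𝓕 α).coeff γ = - MvPolynomial.X ⟨(α, γ), hα, hγ.1, hγ.2⟩) ∧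
    (∀ γ : Mon n, γ ≠ α → ¬(γ ∉ J ∧ mdeg γ = mdeg α) → (𝓕 α).coeff γ = 0)

/-- The ideal `𝔦_J ⊆ ℤ[C]` generated by the `x`-coefficients of all polynomials
in `(𝓕_J) ∩ ⟨N(J)⟩`. -/
def markedCoeffIdeal (J : Set (Mon n))
    (𝓕 : Mon n → MvPolynomial (Fin (n + 1)) (ZC J)) : Ideal (ZC J) :=
  Ideal.span {c : ZC J | ∃ p : MvPolynomial (Fin (n + 1)) (ZC J),
    p ∈ markedIdeal J 𝓕 ∧ p ∈ nSpan (ZC J) J ∧ ∃ γ : Mon n, p.coeff γ = c}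

/-- The evaluation homomorphism `φ_{F_J} : ℤ[C] → A`, `C_{αβ} ↦ c_{αβ}`, associated to a
`J`-marked set `F` with `f_α = x^α − Σ c_{αβ} x^β` (so `c_{αβ} = −(F α).coeff β`). -/
noncomputable def evalHom (J : Set (Mon n)) {A : Type*} [CommRing A]
    (F : Mon n → MvPolynomial (Fin (n + 1)) A) : ZC J →+* A :=
  MvPolynomial.eval₂Hom (Int.castRingHom A) fun p => -((F p.val.1).coeff p.val.2)

/-- `x^γ` is the `σ`-leading monomial of `g` (with nonzero leading coefficient). -/
def IsLeadingMon {A : Type*} [CommRing A] (σlt : Mon n → Mon n → Prop)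
    (g : MvPolynomial (Fin (n + 1)) A) (γ : Mon n) : Prop :=
  g.coeff γ ≠ 0 ∧ ∀ δ ∈ g.support, δ ≠ γ → σlt δ γ

/-- `LC(I, x^γ)`: the set of leading coefficients at `x^γ` of elements of `I`,
together with `0`. -/
def LCset {A : Type*} [CommRing A] (σlt : Mon n → Mon n → Prop)
    (I : Ideal (MvPolynomial (Fin (n + 1)) A)) (γ : Mon n) : Set A :=
  {a | ∃ g ∈ I, IsLeadingMon σlt g γ ∧ g.coeff γ = a} ∪ {0}

/-- A monic ideal with respect to the term ordering `σ`. -/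
def IsMonicIdeal {A : Type*} [CommRing A] (σlt : Mon n → Mon n → Prop)
    (I : Ideal (MvPolynomial (Fin (n + 1)) A)) : Prop :=
  ∀ γ : Mon n, LCset σlt I γ = {0} ∨ LCset σlt I γ = Set.univ

/-- The set of `σ`-leading monomials of elements of `I` (i.e. `in_σ(I)`,
identified with its set of monomials). -/
def leadingMons {A : Type*} [CommRing A] (σlt : Mon n → Mon n → Prop)
    (I : Ideal (MvPolynomial (Fin (n + 1)) A)) : Set (Mon n) :=
  {γ | ∃ g ∈ I, IsLeadingMon σlt g γ}

end MarkedFamilies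
end

/-!
For strongly stable `J` every monomial `x^γ ∈ J` factors uniquely as `x^α *_J x^δ` with
`x^α ∈ B_J` and `min x^α ≥ max x^δ`. Rewriting `x^α *_J x^δ` into `x^δ (x^α - f_α)` terminates,
since the multiplier decreases in the colex order, and gives an `A`-linear normal form `NF` with
values in `⟨N(J)⟩` which is the identity on `⟨N(J)⟩`, kills `x^δ f_α` when `min x^α ≥ max x^δ`,
and satisfies `p - NF p ∈ (F)`. So every `p ∈ (F) ∩ ⟨N(J)⟩` is `NF p`, a combination of the
`NF (x^δ f_α)`, whose coefficients are shown by colex induction on `δ` to come from degrees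
`≤ m + 1`.
-/

namespace MarkedFamilies

variable {n : ℕ}

theorem mdeg_add (a b : Mon n) : mdeg (a + b) = mdeg a + mdeg b :=
  map_add Finsupp.degree a b

theorem weight_one_eq_mdeg (a : Mon n) : Finsupp.weight 1 a = mdeg a := by
  show _ = Finsupp.degree a
  rw [Finsupp.degree_eq_weight_one]
  rfl

theorem IsMonomialIdeal.mem_of_le {J : Set (Mon n)} (hJ : IsMonomialIdeal J) {a b : Mon n}
    (ha : a ∈ J) (hab : a ≤ b) : b ∈ J := by
  simpa [add_tsub_cancel_of_le hab] using hJ a ha (b - a)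

theorem eq_of_le_of_mem_minGens {J : Set (Mon n)} (hJ : IsMonomialIdeal J) {α b : Mon n}
    (hα : α ∈ minGens J) (hb : b ∈ J) (hle : b ≤ α) : b = α := by
  by_contra hne
  obtain ⟨j, hj⟩ : ∃ j, b j < α j := by
    by_contra! h
    exact hne (le_antisymm hle (Finsupp.le_def.2 h))
  refine hα.2 j (by omega) (hJ.mem_of_le hb (Finsupp.le_def.2 fun i => ?_))
  have := Finsupp.le_def.1 hle i
  rcases eq_or_ne j i with rfl | hji
  · simp only [Finsupp.coe_tsub, Pi.sub_apply, Finsupp.single_eq_same]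
    omega
  · simpa [Finsupp.single_eq_of_ne' hji] using this

/-- The decomposition `x^γ = x^α *_J x^δ` of the paper. -/
def IsCanonicalDecomp (J : Set (Mon n)) (γ α δ : Mon n) : Prop :=
  α ∈ minGens J ∧ minGeMax α δ ∧ δ + α = γ

theorem IsStronglyStable.sub_single_mem {J : Set (Mon n)} (hJ : IsStronglyStable J)
    {α δ : Mon n} (hα : α ∈ J) {i l : Fin (n + 1)} (hαi : α i ≠ 0) (hil : i < l) :
    δ + α + Finsupp.single l 1 - Finsupp.single i 1 ∈ J := by
  have hshift := hJ.2 α hα i hαi l hil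
  convert hJ.1 _ hshift δ using 1
  ext k
  simp only [Finsupp.coe_add, Pi.add_apply, Finsupp.coe_tsub, Pi.sub_apply, Finsupp.single_apply]
  split_ifs <;> subst_vars <;> omega

theorem IsStronglyStable.exists_isCanonicalDecomp {J : Set (Mon n)} (hJ : IsStronglyStable J)
    {γ : Mon n} (hγ : γ ∈ J) : ∃ α δ, IsCanonicalDecomp J γ α δ := by
  induction γ using WellFoundedLT.induction with | ind γ ih => ?_
  by_cases hmin : γ ∈ minGens J
  · exact ⟨γ, 0, hmin, fun _ _ _ h => by simp at h, zero_add γ⟩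
  have hS : {j | γ j ≠ 0 ∧ γ - Finsupp.single j 1 ∈ J}.Nonempty := by
    by_contra! h
    exact hmin ⟨hγ, fun j hj hjJ => (Set.eq_empty_iff_forall_notMem.1 h) j ⟨hj, hjJ⟩⟩
  obtain ⟨j, ⟨hj0, hjJ⟩, hjmin⟩ := wellFounded_lt.has_min _ hS
  have hjγ : Finsupp.single j 1 ≤ γ := Finsupp.single_le_iff.2 (Nat.one_le_iff_ne_zero.2 hj0)
  have hlt : γ - Finsupp.single j 1 < γ := by
    conv_rhs => rw [← tsub_add_cancel_of_le hjγ]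
    exact lt_add_of_pos_right _ (pos_iff_ne_zero.2 (by simp))
  obtain ⟨α, δ, hα, hαδ, hδα⟩ := ih _ hlt hjJ
  have hγeq : δ + α + Finsupp.single j 1 = γ := by rw [hδα, tsub_add_cancel_of_le hjγ]
  refine ⟨α, δ + Finsupp.single j 1, hα, fun i hi l hl => ?_, by rw [← hγeq]; abel⟩
  have hl' : δ l ≠ 0 ∨ l = j := by
    by_contra! h'
    simp [Finsupp.single_eq_of_ne h'.2, h'.1] at hl
  rcases hl' with hδl | rfl
  · exact hαδ i hi l (Finsupp.mem_support_iff.2 hδl)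
  -- otherwise `x_i` with `i < l` could replace `x_l` as the least removable variable of `x^γ`
  by_contra! hil
  have hαi : α i ≠ 0 := Finsupp.mem_support_iff.1 hi
  refine hjmin i ⟨?_, hγeq ▸ hJ.sub_single_mem hα.1 hαi hil⟩ hil
  have := DFunLike.congr_fun hγeq i
  simp only [Finsupp.coe_add, Pi.add_apply] at this
  omega

theorem IsCanonicalDecomp.colex_lt_or_le {J : Set (Mon n)} {γ α δ δ₀ β : Mon n}
    (h : IsCanonicalDecomp J γ α δ) (hγ : δ₀ + β = γ) :
    toColex δ < toColex δ₀ ∨ α ≤ β := by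
  obtain ⟨-, hαδ, hδα⟩ := h
  have hpt : ∀ l, δ l + α l = δ₀ l + β l := fun l => by
    simpa using congrArg (· l) (hδα.trans hγ.symm)
  rcases lt_trichotomy (toColex δ) (toColex δ₀) with hlt | heq | hgt
  · exact Or.inl hlt
  · rw [toColex_inj] at heq
    subst heq
    exact Or.inr (add_left_cancel (hδα.trans hγ.symm)).le
  · obtain ⟨k, hk, hδk⟩ := Finsupp.Colex.lt_iff.1 hgt
    simp only [ofColex_toColex] at hk hδk
    refine Or.inr (Finsupp.le_def.2 fun l => ?_)
    by_cases hαl : α l = 0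
    · omega
    -- `x_k` divides `x^δ`, so `x^α` only involves variables `x_l` with `k ≤ l`
    have hkl : k ≤ l := hαδ l (Finsupp.mem_support_iff.2 hαl) k
      (Finsupp.mem_support_iff.2 (by omega))
    rcases hkl.lt_or_eq with hkl | rfl
    · have := hk l hkl; have := hpt l; omega
    · have := hpt k; omega

theorem IsCanonicalDecomp.unique {J : Set (Mon n)} (hJ : IsMonomialIdeal J)
    {γ α δ α' δ' : Mon n} (h : IsCanonicalDecomp J γ α δ) (h' : IsCanonicalDecomp J γ α' δ') :
    α = α' ∧ δ = δ' := by
  have hα : α = α' := by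
    rcases h.colex_lt_or_le h'.2.2 with hlt | hle
    · rcases h'.colex_lt_or_le h.2.2 with hlt' | hle'
      · exact absurd hlt hlt'.asymm
      · exact (eq_of_le_of_mem_minGens hJ h.1 h'.1.1 hle').symm
    · exact eq_of_le_of_mem_minGens hJ h'.1 h.1.1 hle
  subst hα
  exact ⟨rfl, add_right_cancel (h.2.2.trans h'.2.2.symm)⟩

/-- The pair `(α, δ)` with `x^γ = x^α *_J x^δ`; a junk value unless `γ ∈ J` and `J` is
strongly stable. -/
noncomputable def canonDecomp (J : Set (Mon n)) (γ : Mon n) : Mon n × Mon n :=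
  Classical.epsilon fun p => IsCanonicalDecomp J γ p.1 p.2

noncomputable def canonGen (J : Set (Mon n)) (γ : Mon n) : Mon n := (canonDecomp J γ).1

noncomputable def canonMult (J : Set (Mon n)) (γ : Mon n) : Mon n := (canonDecomp J γ).2

theorem isCanonicalDecomp_canonDecomp {J : Set (Mon n)} (hJ : IsStronglyStable J) {γ : Mon n}
    (hγ : γ ∈ J) : IsCanonicalDecomp J γ (canonGen J γ) (canonMult J γ) :=
  let ⟨α, δ, h⟩ := hJ.exists_isCanonicalDecomp hγ
  Classical.epsilon_spec (p := fun p : Mon n × Mon n => IsCanonicalDecomp J γ p.1 p.2) ⟨(α, δ), h⟩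

theorem IsCanonicalDecomp.canonGen_eq_and_canonMult_eq {J : Set (Mon n)}
    (hJ : IsMonomialIdeal J) {γ α δ : Mon n} (h : IsCanonicalDecomp J γ α δ) :
    canonGen J γ = α ∧ canonMult J γ = δ :=
  (IsCanonicalDecomp.unique hJ
    (Classical.epsilon_spec (p := fun p : Mon n × Mon n => IsCanonicalDecomp J γ p.1 p.2)
      ⟨(α, δ), h⟩) h)

theorem canonMult_lt_of_not_mem {J : Set (Mon n)} (hJ : IsStronglyStable J) {δ β : Mon n}
    (hJδβ : δ + β ∈ J) (hβ : β ∉ J) : toColex (canonMult J (δ + β)) < toColex δ :=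
  have h := isCanonicalDecomp_canonDecomp hJ hJδβ
  (h.colex_lt_or_le rfl).resolve_right fun hle => hβ (hJ.1.mem_of_le h.1.1 hle)

theorem canonMult_lt_of_not_minGeMax {J : Set (Mon n)} (hJ : IsStronglyStable J) {α δ : Mon n}
    (hα : α ∈ minGens J) (hαδ : ¬ minGeMax α δ) : toColex (canonMult J (δ + α)) < toColex δ := by
  have h := isCanonicalDecomp_canonDecomp hJ (add_comm α δ ▸ hJ.1 α hα.1 δ)
  refine (h.colex_lt_or_le rfl).resolve_right fun hle => hαδ ?_
  obtain ⟨hgen, hmin, hsum⟩ := h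
  rw [eq_of_le_of_mem_minGens hJ.1 hα hgen.1 hle] at hmin hsum
  rwa [add_right_cancel hsum] at hmin

section MarkedSet

variable {A : Type*} [CommRing A] {J : Set (Mon n)} {F : Mon n → MvPolynomial (Fin (n + 1)) A}

theorem IsGenericMarkedSet.isMarkedSet {𝓕 : Mon n → MvPolynomial (Fin (n + 1)) (ZC J)}
    (h𝓕 : IsGenericMarkedSet J 𝓕) : IsMarkedSet J 𝓕 := fun α hα =>
  ⟨(h𝓕 α hα).1, fun β hβ hne => by_contra fun h => mem_support_iff.1 hβ ((h𝓕 α hα).2.2 β hne h)⟩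

theorem IsMarkedSet.isHomogeneous (hF : IsMarkedSet J F) {α : Mon n} (hα : α ∈ minGens J) :
    (F α).IsHomogeneous (mdeg α) := fun {d} hd => by
  rw [weight_one_eq_mdeg]
  by_cases hdα : d = α
  · rw [hdα]
  · exact ((hF α hα).2 d (mem_support_iff.2 hd) hdα).2

theorem monomial_one_mul_eq_sum (δ : Mon n) {p : MvPolynomial (Fin (n + 1)) A}
    {s : Finset (Mon n)} (hs : p.support ⊆ s) :
    monomial δ 1 * p = ∑ ε ∈ s, p.coeff ε • monomial (δ + ε) 1 := by
  conv_lhs => rw [p.as_sum]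
  rw [Finset.mul_sum, ← Finset.sum_subset hs fun ε _ hε => by
    rw [notMem_support_iff.1 hε, zero_smul]]
  refine Finset.sum_congr rfl fun ε _ => ?_
  rw [monomial_mul, one_mul, smul_monomial, smul_eq_mul, mul_one]

theorem IsMarkedSet.monomial_one_mul_eq (hF : IsMarkedSet J F) {α : Mon n}
    (hα : α ∈ minGens J) (δ : Mon n) :
    monomial δ 1 * F α = monomial (δ + α) 1 +
      ∑ ε ∈ (F α).support.erase α, (F α).coeff ε • monomial (δ + ε) 1 := by
  rw [monomial_one_mul_eq_sum δ (Finset.insert_erase_subset α _),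
    Finset.sum_insert (Finset.notMem_erase _ _), (hF α hα).1, one_smul]

theorem monomial_mem_nSpanDeg {β : Mon n} (hβ : β ∉ J) :
    monomial β (1 : A) ∈ nSpanDeg A J (mdeg β) :=
  Submodule.subset_span ⟨β, hβ, rfl, rfl⟩

theorem nSpanDeg_le_nSpan (s : ℕ) : nSpanDeg A J s ≤ nSpan A J :=
  Submodule.span_mono fun _ ⟨β, hβ, _, hp⟩ => ⟨β, hβ, hp⟩

theorem nSpanDeg_le_homogeneousSubmodule (s : ℕ) :
    nSpanDeg A J s ≤ homogeneousSubmodule (Fin (n + 1)) A s :=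
  Submodule.span_le.2 fun _ ⟨_, _, hβ, hp⟩ => hp ▸ isHomogeneous_monomial _ hβ

noncomputable def markedSpan (J : Set (Mon n)) (F : Mon n → MvPolynomial (Fin (n + 1)) A)
    (S : Set (Mon n)) : Submodule A (MvPolynomial (Fin (n + 1)) A) :=
  Submodule.span A (Set.image2 (fun δ α => monomial δ 1 * F α) S (minGens J))

theorem monomial_one_mul_mem_markedSpan {S : Set (Mon n)} {α δ : Mon n} (hδ : δ ∈ S)
    (hα : α ∈ minGens J) : monomial δ 1 * F α ∈ markedSpan J F S :=
  Submodule.subset_span (Set.mem_image2_of_mem hδ hα)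

theorem markedSpan_mono {S T : Set (Mon n)} (hST : S ⊆ T) : markedSpan J F S ≤ markedSpan J F T :=
  Submodule.span_mono (Set.image2_subset_right hST)

theorem monomial_one_mul_mem_markedSpan_of_mem {S T : Set (Mon n)} {μ : Mon n}
    (hST : ∀ δ ∈ S, μ + δ ∈ T) {p : MvPolynomial (Fin (n + 1)) A} (hp : p ∈ markedSpan J F S) :
    monomial μ 1 * p ∈ markedSpan J F T := by
  refine (Submodule.span_le (p := (markedSpan J F T).comap
    (LinearMap.mulLeft A (monomial μ 1)))).2 ?_ hp
  rintro _ ⟨δ, hδ, α, hα, rfl⟩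
  simpa [← mul_assoc, monomial_mul] using monomial_one_mul_mem_markedSpan (hST δ hδ) hα

theorem restrictScalars_markedIdeal :
    (markedIdeal J F).restrictScalars A = markedSpan J F Set.univ := by
  have hspan : Submodule.span A (Set.range fun δ : Mon n => monomial δ (1 : A)) = ⊤ := by
    simpa [coe_basisMonomials] using (basisMonomials (Fin (n + 1)) A).span_eq
  rw [markedIdeal, Ideal.span, ← Submodule.span_smul_of_span_eq_top hspan, markedSpan,
    ← Set.image2_smul, ← Set.image_univ, Set.image2_image_left, Set.image2_image_right]
  rfl

attribute [local instance] WellFoundedLT.toWellFoundedRelation in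
open scoped Classical in
/-- The normal form of `x^γ` modulo `F`: write `x^γ = x^α *_J x^δ`, replace it by
`x^δ (x^α - f_α)` and recurse. The colex guard only makes the recursion well founded: for a
marked set and strongly stable `J` it holds whenever the new monomial lies in `J`. -/
noncomputable def nfMon (J : Set (Mon n)) (F : Mon n → MvPolynomial (Fin (n + 1)) A)
    (γ : Mon n) : MvPolynomial (Fin (n + 1)) A :=
  if γ ∈ J then
    -∑ ε ∈ (F (canonGen J γ)).support.erase (canonGen J γ), (F (canonGen J γ)).coeff ε •
      if toColex (canonMult J (canonMult J γ + ε)) < toColex (canonMult J γ) then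
        nfMon J F (canonMult J γ + ε)
      else monomial (canonMult J γ + ε) 1
  else monomial γ 1
termination_by toColex (canonMult J γ)

theorem canonMult_induction (J : Set (Mon n)) {P : Mon n → Prop}
    (ind : ∀ γ, (∀ γ', toColex (canonMult J γ') < toColex (canonMult J γ) → P γ') → P γ)
    (γ : Mon n) : P γ :=
  (InvImage.wf (fun γ => toColex (canonMult J γ)) wellFounded_lt).induction γ ind

theorem nfMon_of_not_mem {γ : Mon n} (hγ : γ ∉ J) : nfMon J F γ = monomial γ 1 := by
  rw [nfMon.eq_def, if_neg hγ]

theorem nfMon_of_mem (hJ : IsStronglyStable J) (hF : IsMarkedSet J F) {γ : Mon n} (hγ : γ ∈ J) :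
    nfMon J F γ = -∑ ε ∈ (F (canonGen J γ)).support.erase (canonGen J γ),
      (F (canonGen J γ)).coeff ε • nfMon J F (canonMult J γ + ε) := by
  rw [nfMon.eq_def, if_pos hγ]
  refine congrArg _ (Finset.sum_congr rfl fun ε hε => congrArg _ ?_)
  split_ifs with hlt
  · rfl
  have hεJ := ((hF _ (isCanonicalDecomp_canonDecomp hJ hγ).1).2 ε
    (Finset.mem_of_mem_erase hε) (Finset.ne_of_mem_erase hε)).1
  rw [nfMon_of_not_mem fun hmem => hlt (canonMult_lt_of_not_mem hJ hmem hεJ)]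

theorem nfMon_mem_nSpanDeg (hJ : IsStronglyStable J) (hF : IsMarkedSet J F) (γ : Mon n) :
    nfMon J F γ ∈ nSpanDeg A J (mdeg γ) := by
  induction γ using canonMult_induction J with | ind γ ih => ?_
  by_cases hγ : γ ∈ J
  · obtain ⟨hα, -, hδα⟩ := isCanonicalDecomp_canonDecomp hJ hγ
    rw [nfMon_of_mem hJ hF hγ]
    refine neg_mem (Submodule.sum_mem _ fun ε hε => Submodule.smul_mem _ _ ?_)
    obtain ⟨hεJ, hεdeg⟩ := (hF _ hα).2 ε (Finset.mem_of_mem_erase hε) (Finset.ne_of_mem_erase hε)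
    have hdeg : mdeg (canonMult J γ + ε) = mdeg γ := by rw [mdeg_add, hεdeg, ← mdeg_add, hδα]
    rw [← hdeg]
    by_cases hJε : canonMult J γ + ε ∈ J
    · exact ih _ (canonMult_lt_of_not_mem hJ hJε hεJ)
    · rw [nfMon_of_not_mem hJε]
      exact monomial_mem_nSpanDeg hJε
  · rw [nfMon_of_not_mem hγ]
    exact monomial_mem_nSpanDeg hγ

theorem monomial_sub_nfMon_mem (hJ : IsStronglyStable J) (hF : IsMarkedSet J F) (γ : Mon n) :
    monomial γ 1 - nfMon J F γ ∈
      markedSpan J F {δ | toColex δ ≤ toColex (canonMult J γ)} := by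
  induction γ using canonMult_induction J with | ind γ ih => ?_
  by_cases hγ : γ ∈ J
  · obtain ⟨hα, -, hδα⟩ := isCanonicalDecomp_canonDecomp hJ hγ
    set α := canonGen J γ
    set δ := canonMult J γ
    have hsplit : monomial γ 1 - nfMon J F γ = monomial δ 1 * F α -
        ∑ ε ∈ (F α).support.erase α, (F α).coeff ε • (monomial (δ + ε) 1 - nfMon J F (δ + ε)) := by
      rw [nfMon_of_mem hJ hF hγ, hF.monomial_one_mul_eq hα, hδα]
      simp only [smul_sub, Finset.sum_sub_distrib]
      abel
    rw [hsplit]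
    refine sub_mem (monomial_one_mul_mem_markedSpan (le_refl (toColex δ)) hα)
      (Submodule.sum_mem _ fun ε hε => Submodule.smul_mem _ _ ?_)
    by_cases hJε : δ + ε ∈ J
    · have hlt := canonMult_lt_of_not_mem hJ hJε
        ((hF α hα).2 ε (Finset.mem_of_mem_erase hε) (Finset.ne_of_mem_erase hε)).1
      exact markedSpan_mono (fun _ h => le_trans h hlt.le) (ih _ hlt)
    · rw [nfMon_of_not_mem hJε, sub_self]
      exact zero_mem _
  · rw [nfMon_of_not_mem hγ, sub_self]
    exact zero_mem _

noncomputable def normalForm (J : Set (Mon n)) (F : Mon n → MvPolynomial (Fin (n + 1)) A) :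
    MvPolynomial (Fin (n + 1)) A →ₗ[A] MvPolynomial (Fin (n + 1)) A :=
  (basisMonomials (Fin (n + 1)) A).constr A (nfMon J F)

theorem monomial_eq_smul_monomial_one (γ : Mon n) (c : A) :
    monomial γ c = c • monomial γ (1 : A) := by
  rw [smul_monomial, smul_eq_mul, mul_one]

theorem normalForm_monomial (γ : Mon n) (c : A) :
    normalForm J F (monomial γ c) = c • nfMon J F γ := by
  rw [monomial_eq_smul_monomial_one, map_smul, normalForm]
  simpa using congrArg (c • ·) ((basisMonomials (Fin (n + 1)) A).constr_basis A (nfMon J F) γ)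

theorem normalForm_monomial_one_mul (δ : Mon n) (p : MvPolynomial (Fin (n + 1)) A) :
    normalForm J F (monomial δ 1 * p) = ∑ ε ∈ p.support, p.coeff ε • nfMon J F (δ + ε) := by
  simp only [monomial_one_mul_eq_sum δ subset_rfl, map_sum, map_smul, normalForm_monomial,
    one_smul]

theorem normalForm_eq_self {p : MvPolynomial (Fin (n + 1)) A} (hp : p ∈ nSpan A J) :
    normalForm J F p = p :=
  LinearMap.eqOn_span' (f := normalForm J F) (g := LinearMap.id) (fun q hq => by
    obtain ⟨β, hβ, rfl⟩ := hq
    rw [normalForm_monomial, nfMon_of_not_mem hβ, one_smul, LinearMap.id_apply]) hp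

theorem normalForm_mem_nSpanDeg (hJ : IsStronglyStable J) (hF : IsMarkedSet J F) {s : ℕ}
    {p : MvPolynomial (Fin (n + 1)) A} (hp : p.IsHomogeneous s) :
    normalForm J F p ∈ nSpanDeg A J s := by
  rw [p.as_sum, map_sum]
  refine Submodule.sum_mem _ fun γ hγ => ?_
  have hdeg : mdeg γ = s := weight_one_eq_mdeg γ ▸ hp (mem_support_iff.1 hγ)
  rw [normalForm_monomial]
  exact Submodule.smul_mem _ _ (hdeg ▸ nfMon_mem_nSpanDeg hJ hF γ)

theorem sub_normalForm_mem_markedSpan (hJ : IsStronglyStable J) (hF : IsMarkedSet J F)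
    (p : MvPolynomial (Fin (n + 1)) A) : p - normalForm J F p ∈ markedSpan J F Set.univ := by
  induction p using MvPolynomial.induction_on' with
  | monomial γ c =>
    rw [normalForm_monomial, monomial_eq_smul_monomial_one, ← smul_sub]
    exact Submodule.smul_mem _ _
      (markedSpan_mono (Set.subset_univ _) (monomial_sub_nfMon_mem hJ hF γ))
  | add p q hp hq =>
    rw [map_add, add_sub_add_comm]
    exact add_mem hp hq

theorem normalForm_mem_markedIdeal (hJ : IsStronglyStable J) (hF : IsMarkedSet J F)
    {p : MvPolynomial (Fin (n + 1)) A} (hp : p ∈ markedIdeal J F) :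
    normalForm J F p ∈ markedIdeal J F := by
  have hsub : p - normalForm J F p ∈ markedIdeal J F := by
    rw [← Submodule.restrictScalars_mem A, restrictScalars_markedIdeal]
    exact sub_normalForm_mem_markedSpan hJ hF p
  simpa using sub_mem hp hsub

theorem normalForm_monomial_one_mul_of_minGeMax (hJ : IsStronglyStable J) (hF : IsMarkedSet J F)
    {α δ : Mon n} (hα : α ∈ minGens J) (hαδ : minGeMax α δ) :
    normalForm J F (monomial δ 1 * F α) = 0 := by
  obtain ⟨hgen, hmult⟩ :=
    IsCanonicalDecomp.canonGen_eq_and_canonMult_eq hJ.1 (⟨hα, hαδ, rfl⟩ : IsCanonicalDecomp J _ _ _)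
  rw [hF.monomial_one_mul_eq hα, map_add, normalForm_monomial, one_smul,
    nfMon_of_mem hJ hF (add_comm α δ ▸ hJ.1 α hα.1 δ), hgen, hmult, map_sum]
  simp only [map_smul, normalForm_monomial, one_smul, neg_add_cancel]

theorem sub_normalForm_mem_markedSpan_of_not_minGeMax (hJ : IsStronglyStable J)
    (hF : IsMarkedSet J F) {α δ : Mon n} (hα : α ∈ minGens J) (hαδ : ¬ minGeMax α δ) :
    monomial δ 1 * F α - normalForm J F (monomial δ 1 * F α) ∈
      markedSpan J F {δ' | toColex δ' < toColex δ} := by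
  rw [normalForm_monomial_one_mul, monomial_one_mul_eq_sum δ subset_rfl, ← Finset.sum_sub_distrib]
  refine Submodule.sum_mem _ fun ε hε => ?_
  rw [← smul_sub]
  refine Submodule.smul_mem _ _ ?_
  by_cases hJε : δ + ε ∈ J
  · have hlt : toColex (canonMult J (δ + ε)) < toColex δ := by
      by_cases hεα : ε = α
      · exact hεα ▸ canonMult_lt_of_not_minGeMax hJ hα hαδ
      · exact canonMult_lt_of_not_mem hJ hJε ((hF α hα).2 ε hε hεα).1
    exact markedSpan_mono (fun _ h => lt_of_le_of_lt h hlt) (monomial_sub_nfMon_mem hJ hF _)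
  · rw [nfMon_of_not_mem hJε, sub_self]
    exact zero_mem _

theorem normalForm_mem_map_C {I : Ideal A} {p : MvPolynomial (Fin (n + 1)) A}
    (hp : p ∈ Ideal.map C I) : normalForm J F p ∈ Ideal.map C I := by
  rw [p.as_sum, map_sum]
  refine Submodule.sum_mem _ fun γ _ => ?_
  rw [normalForm_monomial, smul_eq_C_mul]
  exact Ideal.mul_mem_right _ _ (Ideal.mem_map_of_mem C (mem_map_C_iff.1 hp γ))

theorem normalForm_mem_map_C_of_mem_markedSpan {I : Ideal A} {S : Set (Mon n)}
    (hS : ∀ δ ∈ S, ∀ α ∈ minGens J, normalForm J F (monomial δ 1 * F α) ∈ Ideal.map C I)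
    {p : MvPolynomial (Fin (n + 1)) A} (hp : p ∈ markedSpan J F S) :
    normalForm J F p ∈ Ideal.map C I := by
  refine (Submodule.span_le (p := (Ideal.map C I).restrictScalars A |>.comap
    (normalForm J F))).2 ?_ hp
  rintro _ ⟨δ, hδ, α, hα, rfl⟩
  exact hS δ hδ α hα

def lowDegCoeffIdeal (J : Set (Mon n)) (F : Mon n → MvPolynomial (Fin (n + 1)) A) (m : ℕ) :
    Ideal A :=
  Ideal.span {c : A | ∃ p : MvPolynomial (Fin (n + 1)) A,
    p ∈ markedIdeal J F ∧ p ∈ nSpan A J ∧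
    (∃ s : ℕ, s ≤ m + 1 ∧ p.IsHomogeneous s) ∧ ∃ γ : Mon n, p.coeff γ = c}

theorem normalForm_monomial_one_mul_mem_of_le (hJ : IsStronglyStable J) (hF : IsMarkedSet J F)
    {m : ℕ} {α δ : Mon n} (hα : α ∈ minGens J) (hdeg : mdeg δ + mdeg α ≤ m + 1) :
    normalForm J F (monomial δ 1 * F α) ∈ Ideal.map C (lowDegCoeffIdeal J F m) := by
  have hmem : monomial δ 1 * F α ∈ markedIdeal J F :=
    Ideal.mul_mem_left _ _ (Ideal.subset_span ⟨α, hα, rfl⟩)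
  have hN := normalForm_mem_nSpanDeg hJ hF
    ((isHomogeneous_monomial (d := δ) (1 : A) rfl).mul (hF.isHomogeneous hα))
  exact mem_map_C_iff.2 fun γ => Ideal.subset_span ⟨_, normalForm_mem_markedIdeal hJ hF hmem,
    nSpanDeg_le_nSpan _ hN, ⟨_, hdeg, nSpanDeg_le_homogeneousSubmodule _ hN⟩, γ, rfl⟩

/-- Unless `min x^α ≥ max x^δ` (where the normal form vanishes), some `x_j ∣ x^δ` exceeds a
variable of `x^α`, and `x^δ f_α = x^{δ-e_j} (x_j f_α - NF(x_j f_α)) + x^{δ-e_j} NF(x_j f_α)`: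
the first term is a combination of `x^{δ'} f_β` with `δ'` colex-smaller than `δ`, the second
has coefficients coming from degree `|α| + 1 ≤ m + 1`. -/
theorem normalForm_monomial_one_mul_mem (hJ : IsStronglyStable J) (hF : IsMarkedSet J F)
    {m : ℕ} (hm : ∀ α ∈ minGens J, mdeg α ≤ m) (δ : Mon n) {α : Mon n} (hα : α ∈ minGens J) :
    normalForm J F (monomial δ 1 * F α) ∈ Ideal.map C (lowDegCoeffIdeal J F m) := by
  induction h : toColex δ using WellFoundedLT.induction generalizing δ α with | ind d ih => ?_
  subst h
  by_cases hαδ : minGeMax α δ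
  · rw [normalForm_monomial_one_mul_of_minGeMax hJ hF hα hαδ]
    exact zero_mem _
  obtain ⟨i, hi, j, hj, hij⟩ : ∃ i ∈ α.support, ∃ j ∈ δ.support, i < j := by
    simpa [minGeMax] using hαδ
  obtain ⟨δ', rfl⟩ : ∃ δ', δ = δ' + Finsupp.single j 1 :=
    le_iff_exists_add'.1 (Finsupp.single_le_iff.2 (Nat.one_le_iff_ne_zero.2
      (Finsupp.mem_support_iff.1 hj)))
  set q := monomial (Finsupp.single j 1) (1 : A) * F α
  have hsplit : monomial (δ' + Finsupp.single j 1) 1 * F α =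
      monomial δ' 1 * (q - normalForm J F q) + monomial δ' 1 * normalForm J F q := by
    rw [← mul_add, sub_add_cancel, ← mul_assoc, monomial_mul, one_mul]
  have hq : q - normalForm J F q ∈ markedSpan J F {δ | toColex δ < toColex (Finsupp.single j 1)} :=
    sub_normalForm_mem_markedSpan_of_not_minGeMax hJ hF hα
      fun h => absurd (h i hi j (by simp)) (not_le.2 hij)
  have hlow : normalForm J F q ∈ Ideal.map C (lowDegCoeffIdeal J F m) :=
    normalForm_monomial_one_mul_mem_of_le hJ hF hα (by
      rw [show mdeg (Finsupp.single j 1) = 1 from Finsupp.degree_single j 1]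
      linarith [hm α hα])
  rw [hsplit, map_add]
  refine add_mem ?_ (normalForm_mem_map_C (Ideal.mul_mem_left _ _ hlow))
  have hlt := monomial_one_mul_mem_markedSpan_of_mem (μ := δ') (T := {δ | toColex δ <
    toColex (δ' + Finsupp.single j 1)}) (fun _ hδ => by
      simpa only [Set.mem_ofPred_eq, toColex_add] using add_lt_add_of_le_of_lt le_rfl hδ) hq
  exact normalForm_mem_map_C_of_mem_markedSpan (fun δ hδ α hα => ih _ hδ δ hα rfl) hlt

theorem span_coeff_markedIdeal_inf_nSpan_eq (hJ : IsStronglyStable J) (hF : IsMarkedSet J F)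
    {m : ℕ} (hm : ∀ α ∈ minGens J, mdeg α ≤ m) :
    Ideal.span {c : A | ∃ p : MvPolynomial (Fin (n + 1)) A,
      p ∈ markedIdeal J F ∧ p ∈ nSpan A J ∧ ∃ γ : Mon n, p.coeff γ = c} =
      lowDegCoeffIdeal J F m := by
  refine le_antisymm (Ideal.span_le.2 ?_) (Ideal.span_mono fun c ⟨p, hpI, hpN, _, hc⟩ =>
    ⟨p, hpI, hpN, hc⟩)
  rintro _ ⟨p, hpI, hpN, γ, rfl⟩
  rw [← Submodule.restrictScalars_mem A, restrictScalars_markedIdeal] at hpI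
  have hNF : normalForm J F p ∈ Ideal.map C (lowDegCoeffIdeal J F m) :=
    normalForm_mem_map_C_of_mem_markedSpan
      (fun δ _ α hα => normalForm_monomial_one_mul_mem hJ hF hm δ hα) hpI
  rw [← normalForm_eq_self hpN]
  exact mem_map_C_iff.1 hNF γ

end MarkedSet

end MarkedFamilies

open MarkedFamilies in
theorem stmt_14_general {n : ℕ} (J : Set (Mon n)) (hJ : IsStronglyStable J)
    (m : ℕ) (hm : ∀ α ∈ minGens J, mdeg α ≤ m)
    (𝓕 : Mon n → MvPolynomial (Fin (n + 1)) (ZC J)) (h𝓕 : IsGenericMarkedSet J 𝓕) :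
    markedCoeffIdeal J 𝓕 =
      Ideal.span {c : ZC J | ∃ p : MvPolynomial (Fin (n + 1)) (ZC J),
        p ∈ markedIdeal J 𝓕 ∧ p ∈ nSpan (ZC J) J ∧
        (∃ s : ℕ, s ≤ m + 1 ∧ p.IsHomogeneous s) ∧ ∃ γ : Mon n, p.coeff γ = c} :=
  span_coeff_markedIdeal_inf_nSpan_eq hJ h𝓕.isMarkedSet hm

open MarkedFamilies in
/-- `𝔦_J` is generated by the `x`-coefficients of the homogeneous
polynomials of `(𝓕_J) ∩ ⟨N(J)⟩` of degree `s ≤ m + 1`, with `m` the maximal degree of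
a minimal generator. -/
theorem stmt_14 {n : ℕ} (J : Set (Mon n)) (hJ : IsStronglyStable J)
    (m : ℕ) (hm : ∀ α ∈ minGens J, mdeg α ≤ m) (hm' : ∃ α ∈ minGens J, mdeg α = m)
    (𝓕 : Mon n → MvPolynomial (Fin (n + 1)) (ZC J)) (h𝓕 : IsGenericMarkedSet J 𝓕) :
    markedCoeffIdeal J 𝓕 =
      Ideal.span {c : ZC J | ∃ p : MvPolynomial (Fin (n + 1)) (ZC J),
        p ∈ markedIdeal J 𝓕 ∧ p ∈ nSpan (ZC J) J ∧
        (∃ s : ℕ, s ≤ m + 1 ∧ p.IsHomogeneous s) ∧ ∃ γ : Mon n, p.coeff γ = c} :=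
  stmt_14_general J hJ m hm 𝓕 h𝓕
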